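/- Let γ_AB = [[A, C],[Cᵀ, B]] be the covariance matrix of a bipartite state with respect to LOOs on ℂ^{d_A} and ℂ^{d_B}. If ‖C‖_tr > √((d_A − Tr ρ_A²)(1 − Tr ρ_B²)), then there is no PSD matrix κ_B that is a convex combination of covariance matrices of pure states on ℂ^{d_B} (so that Tr κ_B ≥ d_B − 1) with γ_AB ≥ 0_A ⊕ κ_B. -/

import Mathlib

open Matrix BigOperators Finset ComplexOrder Kronecker

/-- The positive semidefinite square root of a positive semidefinite matrix
(as defined in Mathlib of December 2024, since removed). -/
noncomputable def Matrix.PosSemidef.sqrt {n : Type*} [Fintype n] [DecidableEq n] {𝕜 : Type*}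
    [RCLike 𝕜] {A : Matrix n n 𝕜} (hA : A.PosSemidef) : Matrix n n 𝕜 :=
  hA.1.eigenvectorUnitary.1 * diagonal ((↑) ∘ (√·) ∘ hA.1.eigenvalues) *
  (star hA.1.eigenvectorUnitary : Matrix n n 𝕜)

/-- Trace norm of a real matrix: `Tr √(MᵀM)`, the sum of singular values. -/
noncomputable def traceNorm {m n : Type*} [Fintype m] [Fintype n] [DecidableEq n]
    (M : Matrix m n ℝ) : ℝ :=
  (Matrix.posSemidef_conjTranspose_mul_self M).sqrt.trace

/-- Symmetrized covariance matrix of a state `σ` with respect to a family of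
observables `O` indexed by `ι`. -/
noncomputable def covMatG {d : Type*} [Fintype d] {ι : Type*} [Fintype ι]
    (O : ι → Matrix d d ℂ) (σ : Matrix d d ℂ) : Matrix ι ι ℝ :=
  Matrix.of fun i j =>
    ((σ * (O i * O j)).trace.re + (σ * (O j * O i)).trace.re) / 2
      - (σ * O i).trace.re * (σ * O j).trace.re

/-!
Subtracting `0 ⊕ κ_B` from `γ_AB` leaves a positive semidefinite block matrix
`[[γ_A, C], [Cᵀ, γ_B - κ_B]]`. For any such block matrix `[[P, C], [Cᵀ, Q]]`, pair each right
singular vector `v` of `C` with its left singular vector `u`: the Cauchy–Schwarz inequality for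
the block form bounds the singular value `uᵀ C v` by `√(uᵀ P u) √(vᵀ Q v)`, and Bessel's inequality
bounds `∑ uᵀ P u` and `∑ vᵀ Q v` by `Tr P` and `Tr Q`, so `‖C‖_tr ≤ √(Tr P · Tr Q)`.
A family of `d²` trace-orthonormal Hermitian matrices is a basis, whence
`Tr γ(σ) = d Tr σ - Tr σ²`; so `Tr γ_A = d_A - Tr ρ_A²`, every pure state has `Tr γ = d_B - 1`,
and `Tr (γ_B - κ_B) = 1 - Tr ρ_B²`, contradicting the hypothesis on `‖C‖_tr`.
-/

namespace Matrix

variable {m n : Type*}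

theorem PosSemidef.of_fromBlocks₁₁ {R : Type*} [CommRing R] [PartialOrder R] [StarRing R]
    {P : Matrix m m R} {C : Matrix m n R} {D : Matrix n m R} {Q : Matrix n n R}
    (h : (fromBlocks P C D Q).PosSemidef) : P.PosSemidef :=
  h.submatrix Sum.inl

theorem PosSemidef.of_fromBlocks₂₂ {R : Type*} [CommRing R] [PartialOrder R] [StarRing R]
    {P : Matrix m m R} {C : Matrix m n R} {D : Matrix n m R} {Q : Matrix n n R}
    (h : (fromBlocks P C D Q).PosSemidef) : Q.PosSemidef :=
  h.submatrix Sum.inr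

variable [Fintype m] [Fintype n]

theorem PosSemidef.sq_dotProduct_mulVec_le_of_fromBlocks {P : Matrix m m ℝ} {C : Matrix m n ℝ}
    {Q : Matrix n n ℝ} (h : (fromBlocks P C Cᵀ Q).PosSemidef) (x : m → ℝ) (y : n → ℝ) :
    (x ⬝ᵥ C *ᵥ y) ^ 2 ≤ (x ⬝ᵥ P *ᵥ x) * (y ⬝ᵥ Q *ᵥ y) := by
  have hquad (t : ℝ) :
      0 ≤ (y ⬝ᵥ Q *ᵥ y) * (t * t) + 2 * (x ⬝ᵥ C *ᵥ y) * t + x ⬝ᵥ P *ᵥ x := by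
    have := h.dotProduct_mulVec_nonneg (Sum.elim x (t • y))
    simp only [star_trivial, fromBlocks_mulVec, sumElim_dotProduct_sumElim, mulVec_transpose,
      Sum.elim_comp_inl, Sum.elim_comp_inr, dotProduct_add, mulVec_smul, dotProduct_smul,
      smul_dotProduct, smul_eq_mul, dotProduct_comm y (x ᵥ* C), ← dotProduct_mulVec] at this
    linarith
  have := discrim_le_zero hquad
  rw [discrim] at this
  nlinarith

theorem PosSemidef.trace_mul_mul_transpose_le {ι : Type*} [Fintype ι] [DecidableEq ι]
    [DecidableEq m] {P : Matrix m m ℝ} (hP : P.PosSemidef) {R : Matrix ι m ℝ} (hR : R * Rᵀ = 1) :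
    (R * P * Rᵀ).trace ≤ P.trace := by
  have hproj : (1 - Rᵀ * R)ᵀ * (1 - Rᵀ * R) = 1 - Rᵀ * R := by
    simp only [transpose_sub, transpose_one, transpose_mul, transpose_transpose, sub_mul,
      mul_sub, Matrix.one_mul, Matrix.mul_one, Matrix.mul_assoc]
    rw [← Matrix.mul_assoc R, hR, Matrix.one_mul, sub_self, sub_zero]
  have hnonneg := (hP.mul_mul_conjTranspose_same (1 - Rᵀ * R)).trace_nonneg
  rw [conjTranspose_eq_transpose_of_trivial, trace_mul_cycle, hproj, Matrix.sub_mul,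
    Matrix.one_mul, trace_sub] at hnonneg
  rw [trace_mul_cycle]
  linarith

theorem IsHermitian.eigenvectorBasis_dotProduct [DecidableEq n] {H : Matrix n n ℝ}
    (hH : H.IsHermitian) (i j : n) :
    ⇑(hH.eigenvectorBasis i) ⬝ᵥ ⇑(hH.eigenvectorBasis j) = if i = j then 1 else 0 := by
  rw [dotProduct_comm, ← star_trivial ⇑(hH.eigenvectorBasis i),
    ← EuclideanSpace.inner_eq_star_dotProduct]
  exact orthonormal_iff_ite.mp hH.eigenvectorBasis.orthonormal i j

theorem IsHermitian.eigenvectorBasis_dotProduct_mulVec [DecidableEq n] {H : Matrix n n ℝ}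
    (hH : H.IsHermitian) (i j : n) :
    ⇑(hH.eigenvectorBasis i) ⬝ᵥ H *ᵥ ⇑(hH.eigenvectorBasis j)
      = if i = j then hH.eigenvalues i else 0 := by
  rw [hH.mulVec_eigenvectorBasis, dotProduct_smul, hH.eigenvectorBasis_dotProduct, smul_eq_mul]
  split_ifs with h <;> simp [h]

theorem PosSemidef.sum_dotProduct_mulVec_le_trace {ι : Type*} [Fintype ι] [DecidableEq ι]
    [DecidableEq m] {P : Matrix m m ℝ} (hP : P.PosSemidef) {u : ι → m → ℝ}
    (hu : ∀ i j, u i ⬝ᵥ u j = if i = j then 1 else 0) :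
    ∑ i, u i ⬝ᵥ P *ᵥ u i ≤ P.trace := by
  have hR : of u * (of u)ᵀ = 1 := by
    ext i j
    rw [mul_apply', one_apply]
    exact hu i j
  calc ∑ i, u i ⬝ᵥ P *ᵥ u i = (of u * P * (of u)ᵀ).trace := by
        refine Finset.sum_congr rfl fun i _ => ?_
        rw [diag_apply, Matrix.mul_assoc, mul_apply']
        rfl
    _ ≤ P.trace := hP.trace_mul_mul_transpose_le hR

theorem PosSemidef.sum_normalize_dotProduct_mulVec_le_trace {ι : Type*} [Fintype ι]
    [DecidableEq m] {P : Matrix m m ℝ} (hP : P.PosSemidef) {w : ι → m → ℝ}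
    (hw : Pairwise fun i j => w i ⬝ᵥ w j = 0) :
    ∑ i, ((√(w i ⬝ᵥ w i))⁻¹ • w i) ⬝ᵥ P *ᵥ ((√(w i ⬝ᵥ w i))⁻¹ • w i) ≤ P.trace := by
  classical
  set u : ι → m → ℝ := fun i => (√(w i ⬝ᵥ w i))⁻¹ • w i
  have hu : ∀ i j : {i // w i ⬝ᵥ w i ≠ 0}, u i ⬝ᵥ u j = if i = j then 1 else 0 := by
    rintro ⟨i, hi⟩ ⟨j, -⟩
    have hpos : 0 < w i ⬝ᵥ w i :=
      lt_of_le_of_ne (by simpa using dotProduct_star_self_nonneg (w i)) (Ne.symm hi)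
    simp only [u, smul_dotProduct, dotProduct_smul, smul_eq_mul, Subtype.mk.injEq]
    split_ifs with hij
    · subst hij
      field_simp
      rw [Real.sq_sqrt hpos.le]
    · rw [hw hij, mul_zero, mul_zero]
  rw [← Finset.sum_filter_of_ne (p := fun i => w i ⬝ᵥ w i ≠ 0) fun i _ h hi => h (by simp [hi]),
    Finset.sum_subtype (p := fun i => w i ⬝ᵥ w i ≠ 0) _ fun _ => Finset.mem_filter_univ _]
  exact hP.sum_dotProduct_mulVec_le_trace hu

theorem IsHermitian.im_trace_mul_eq_zero {d : Type*} [Fintype d] {σ M : Matrix d d ℂ}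
    (hσ : σ.IsHermitian) (hM : M.IsHermitian) : (σ * M).trace.im = 0 := by
  refine Complex.conj_eq_iff_im.mp ?_
  rw [← Complex.star_def, ← trace_conjTranspose, conjTranspose_mul, hσ.eq, hM.eq, trace_mul_comm]

section PartialTrace
variable {a b R : Type*} [AddCommMonoid R]

def traceRight [Fintype b] (ρ : Matrix (a × b) (a × b) R) : Matrix a a R :=
  of fun i i' => ∑ j, ρ (i, j) (i', j)

def traceLeft [Fintype a] (ρ : Matrix (a × b) (a × b) R) : Matrix b b R :=
  of fun j j' => ∑ i, ρ (i, j) (i, j')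

variable {ρ : Matrix (a × b) (a × b) R}

theorem trace_traceRight [Fintype a] [Fintype b] : ρ.traceRight.trace = ρ.trace :=
  (Fintype.sum_prod_type fun x => ρ x x).symm

theorem trace_traceLeft [Fintype a] [Fintype b] : ρ.traceLeft.trace = ρ.trace :=
  Finset.sum_comm.trans (Fintype.sum_prod_type fun x => ρ x x).symm

variable [StarAddMonoid R]

theorem IsHermitian.traceRight [Fintype b] (hρ : ρ.IsHermitian) : ρ.traceRight.IsHermitian := by
  ext i i'
  simp only [conjTranspose_apply, Matrix.traceRight, of_apply, star_sum, hρ.apply]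

theorem IsHermitian.traceLeft [Fintype a] (hρ : ρ.IsHermitian) : ρ.traceLeft.IsHermitian := by
  ext j j'
  simp only [conjTranspose_apply, Matrix.traceLeft, of_apply, star_sum, hρ.apply]

end PartialTrace

end Matrix

section TraceNorm
variable {m n : Type*} [Fintype m] [Fintype n] [DecidableEq n]

theorem traceNorm_eq_sum_sqrt_eigenvalues (C : Matrix m n ℝ) :
    traceNorm C = ∑ i, √((posSemidef_conjTranspose_mul_self C).1.eigenvalues i) := by
  have hU := (posSemidef_conjTranspose_mul_self C).1.eigenvectorUnitary.2
  rw [traceNorm, PosSemidef.sqrt, trace_mul_cycle, Matrix.mem_unitaryGroup_iff'.mp hU,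
    Matrix.one_mul, trace_diagonal]
  simp

theorem traceNorm_le_sqrt_trace_mul_trace [DecidableEq m] {P : Matrix m m ℝ} {C : Matrix m n ℝ}
    {Q : Matrix n n ℝ} (h : (fromBlocks P C Cᵀ Q).PosSemidef) :
    traceNorm C ≤ √(P.trace * Q.trace) := by
  set hH := (posSemidef_conjTranspose_mul_self C).1
  set v : n → n → ℝ := fun i => ⇑(hH.eigenvectorBasis i)
  -- the left singular vector paired with `v i`; it is `0` when `C *ᵥ v i = 0`, as `0⁻¹ = 0`
  set u : n → m → ℝ := fun i => (√(C *ᵥ v i ⬝ᵥ C *ᵥ v i))⁻¹ • C *ᵥ v i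
  have hPnn (x : m → ℝ) : 0 ≤ x ⬝ᵥ P *ᵥ x := by
    simpa using h.of_fromBlocks₁₁.dotProduct_mulVec_nonneg x
  have hQnn (y : n → ℝ) : 0 ≤ y ⬝ᵥ Q *ᵥ y := by
    simpa using h.of_fromBlocks₂₂.dotProduct_mulVec_nonneg y
  have hCv (i j : n) : C *ᵥ v i ⬝ᵥ C *ᵥ v j = if i = j then hH.eigenvalues i else 0 := by
    have hgram (x y : n → ℝ) : x ⬝ᵥ (Cᴴ * C) *ᵥ y = C *ᵥ x ⬝ᵥ C *ᵥ y := by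
      rw [← mulVec_mulVec, dotProduct_mulVec, conjTranspose_eq_transpose_of_trivial,
        vecMul_transpose]
    rw [← hgram]
    exact hH.eigenvectorBasis_dotProduct_mulVec i j
  have hsing (i : n) : √(hH.eigenvalues i) ≤ √(u i ⬝ᵥ P *ᵥ u i) * √(v i ⬝ᵥ Q *ᵥ v i) := by
    have huCv : u i ⬝ᵥ C *ᵥ v i = √(hH.eigenvalues i) := by
      simp only [u, smul_dotProduct, smul_eq_mul, hCv, if_true]
      rw [← div_eq_inv_mul, Real.div_sqrt]
    rw [← Real.sqrt_mul (hPnn _)]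
    refine Real.sqrt_le_sqrt ?_
    have := h.sq_dotProduct_mulVec_le_of_fromBlocks (u i) (v i)
    rwa [huCv, Real.sq_sqrt ((posSemidef_conjTranspose_mul_self C).eigenvalues_nonneg i)] at this
  have hP : ∑ i, u i ⬝ᵥ P *ᵥ u i ≤ P.trace :=
    h.of_fromBlocks₁₁.sum_normalize_dotProduct_mulVec_le_trace fun i j hij => by
      simp [hCv, hij]
  have hQ : ∑ i, v i ⬝ᵥ Q *ᵥ v i ≤ Q.trace :=
    h.of_fromBlocks₂₂.sum_dotProduct_mulVec_le_trace hH.eigenvectorBasis_dotProduct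
  rw [traceNorm_eq_sum_sqrt_eigenvalues, Real.sqrt_mul h.of_fromBlocks₁₁.trace_nonneg]
  calc ∑ i, √(hH.eigenvalues i)
      ≤ ∑ i, √(u i ⬝ᵥ P *ᵥ u i) * √(v i ⬝ᵥ Q *ᵥ v i) := Finset.sum_le_sum fun i _ => hsing i
    _ ≤ √(∑ i, u i ⬝ᵥ P *ᵥ u i) * √(∑ i, v i ⬝ᵥ Q *ᵥ v i) :=
      Real.sum_sqrt_mul_sqrt_le _ (fun i => hPnn (u i)) fun i => hQnn (v i)
    _ ≤ √P.trace * √Q.trace := by gcongr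

end TraceNorm

section LOO
variable {d ι : Type*} [Fintype d] [DecidableEq d] [Fintype ι] [DecidableEq ι]
  {O : ι → Matrix d d ℂ}

theorem linearIndependent_of_trace_mul_eq_ite
    (horth : ∀ k l, (O k * O l).trace = if k = l then 1 else 0) : LinearIndependent ℂ O := by
  refine Fintype.linearIndependent_iff.mpr fun c hc l => ?_
  simpa [Finset.sum_mul, trace_sum, horth] using congrArg (fun M => (M * O l).trace) hc

theorem sum_trace_mul_smul_eq_self
    (horth : ∀ k l, (O k * O l).trace = if k = l then 1 else 0)
    (hcard : Fintype.card ι = Fintype.card d ^ 2) (M : Matrix d d ℂ) :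
    ∑ k, (O k * M).trace • O k = M := by
  have htop := (linearIndependent_of_trace_mul_eq_ite horth).span_eq_top_of_card_eq_finrank'
    (by rw [Module.finrank_matrix, Module.finrank_self, hcard, sq, mul_one])
  obtain ⟨c, rfl⟩ :=
    (Submodule.mem_span_range_iff_exists_fun ℂ).mp (htop ▸ Submodule.mem_top : M ∈ _)
  simp [Finset.mul_sum, trace_sum, horth]

theorem sum_apply_mul_apply_eq_ite
    (horth : ∀ k l, (O k * O l).trace = if k = l then 1 else 0)
    (hcard : Fintype.card ι = Fintype.card d ^ 2) (a b c : d) :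
    ∑ k, O k a b * O k b c = if a = c then 1 else 0 := by
  have := congrFun (congrFun (sum_trace_mul_smul_eq_self horth hcard (single b a 1)) b) c
  simpa [trace_mul_single, Matrix.sum_apply, single_apply] using this

theorem sum_mul_self_eq_card_smul_one
    (horth : ∀ k l, (O k * O l).trace = if k = l then 1 else 0)
    (hcard : Fintype.card ι = Fintype.card d ^ 2) :
    ∑ k, O k * O k = (Fintype.card d : ℂ) • 1 := by
  ext a c
  rw [Matrix.sum_apply, Matrix.smul_apply, one_apply]
  simp only [mul_apply]
  rw [Finset.sum_comm]
  simp [sum_apply_mul_apply_eq_ite horth hcard]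

theorem sum_trace_mul_sq_eq_trace_mul_self
    (horth : ∀ k l, (O k * O l).trace = if k = l then 1 else 0)
    (hcard : Fintype.card ι = Fintype.card d ^ 2) (σ : Matrix d d ℂ) :
    ∑ k, (σ * O k).trace ^ 2 = (σ * σ).trace := by
  nth_rewrite 3 [← sum_trace_mul_smul_eq_self horth hcard σ]
  simp [Finset.mul_sum, trace_sum, trace_mul_comm (O _) σ, sq]

theorem trace_covMatG (hherm : ∀ k, (O k).IsHermitian)
    (horth : ∀ k l, (O k * O l).trace = if k = l then 1 else 0)
    (hcard : Fintype.card ι = Fintype.card d ^ 2) {σ : Matrix d d ℂ} (hσ : σ.IsHermitian) :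
    (covMatG O σ).trace = Fintype.card d * σ.trace.re - (σ * σ).trace.re := by
  have hdiag (k : ι) :
      covMatG O σ k k = (σ * (O k * O k)).trace.re - ((σ * O k).trace ^ 2).re := by
    simp [covMatG, sq, Complex.mul_re, hσ.im_trace_mul_eq_zero (hherm k)]
  rw [trace]
  simp only [diag_apply, hdiag]
  rw [Finset.sum_sub_distrib, ← Complex.re_sum, ← Complex.re_sum, ← trace_sum, ← Finset.mul_sum,
    sum_mul_self_eq_card_smul_one horth hcard, sum_trace_mul_sq_eq_trace_mul_self horth hcard]
  simp

theorem trace_covMatG_vecMulVec_star (hherm : ∀ k, (O k).IsHermitian)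
    (horth : ∀ k l, (O k * O l).trace = if k = l then 1 else 0)
    (hcard : Fintype.card ι = Fintype.card d ^ 2) {b : d → ℂ}
    (hb : ∑ i, Complex.normSq (b i) = 1) :
    (covMatG O (vecMulVec b (star b))).trace = Fintype.card d - 1 := by
  have hnorm : star b ⬝ᵥ b = 1 := by
    simp [dotProduct, ← Complex.normSq_eq_conj_mul_self, ← Complex.ofReal_sum, hb]
  have htr : (vecMulVec b (star b)).trace = 1 := by
    rw [trace_vecMulVec, dotProduct_comm, hnorm]
  rw [trace_covMatG hherm horth hcard (posSemidef_vecMulVec_self_star b).1, vecMulVec_mul_vecMulVec,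
    hnorm, one_smul, htr]
  simp

end LOO

theorem traceNorm_violation_rules_out_LHS_covariance_general (dA dB : ℕ)
    (ρ : Matrix (Fin dA × Fin dB) (Fin dA × Fin dB) ℂ)
    (hρ : ρ.PosSemidef) (hρ1 : ρ.trace = 1)
    (A : Fin (dA ^ 2) → Matrix (Fin dA) (Fin dA) ℂ)
    (hhermA : ∀ k, (A k).IsHermitian)
    (horthA : ∀ k l, (A k * A l).trace = if k = l then 1 else 0)
    (B : Fin (dB ^ 2) → Matrix (Fin dB) (Fin dB) ℂ)
    (hhermB : ∀ k, (B k).IsHermitian)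
    (horthB : ∀ k l, (B k * B l).trace = if k = l then 1 else 0) :
    let ρA : Matrix (Fin dA) (Fin dA) ℂ := Matrix.of fun i i' => ∑ j, ρ (i, j) (i', j)
    let ρB : Matrix (Fin dB) (Fin dB) ℂ := Matrix.of fun j j' => ∑ i, ρ (i, j) (i, j')
    let Cb : Matrix (Fin (dA ^ 2)) (Fin (dB ^ 2)) ℝ := Matrix.of fun k l =>
      (ρ * (A k ⊗ₖ B l)).trace.re - (ρA * A k).trace.re * (ρB * B l).trace.re
    let γAB := Matrix.fromBlocks (covMatG A ρA) Cb Cbᵀ (covMatG B ρB)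
    Real.sqrt (((dA : ℝ) - (ρA * ρA).trace.re) * (1 - (ρB * ρB).trace.re))
        < traceNorm Cb →
      ¬ ∃ (K : ℕ) (p : Fin K → ℝ) (b : Fin K → (Fin dB → ℂ)),
        (∀ k, 0 ≤ p k) ∧ (∑ k, p k = 1) ∧
        (∀ k, ∑ i, Complex.normSq (b k i) = 1) ∧
        (γAB - Matrix.fromBlocks 0 0 0
          (∑ k, p k • covMatG B (Matrix.vecMulVec (b k) (star (b k))))).PosSemidef := by
  intro ρA ρB Cb γAB hlt ⟨K, p, b, _, hp1, hb, hpsd⟩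
  set κ := ∑ k, p k • covMatG B (vecMulVec (b k) (star (b k)))
  have hcardA : Fintype.card (Fin (dA ^ 2)) = Fintype.card (Fin dA) ^ 2 := by simp
  have hcardB : Fintype.card (Fin (dB ^ 2)) = Fintype.card (Fin dB) ^ 2 := by simp
  have hρA : ρA.IsHermitian := hρ.1.traceRight
  have hρB : ρB.IsHermitian := hρ.1.traceLeft
  have htrA : ρA.trace = 1 := ρ.trace_traceRight.trans hρ1
  have htrB : ρB.trace = 1 := ρ.trace_traceLeft.trans hρ1
  have htrκ : κ.trace = dB - 1 := by
    simp [κ, trace_sum, trace_covMatG_vecMulVec_star hhermB horthB hcardB (hb _),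
      ← Finset.sum_mul, hp1]
  have hblock : (fromBlocks (covMatG A ρA) Cb Cbᵀ (covMatG B ρB - κ)).PosSemidef := by
    convert hpsd using 1
    simp [γAB, sub_eq_add_neg, fromBlocks_neg, fromBlocks_add]
  have hbound := traceNorm_le_sqrt_trace_mul_trace hblock
  rw [trace_covMatG hhermA horthA hcardA hρA, trace_sub,
    trace_covMatG hhermB horthB hcardB hρB, htrκ, htrA, htrB] at hbound
  refine lt_irrefl _ (hlt.trans_le (hbound.trans_eq ?_))
  simp only [Fintype.card_fin, Complex.one_re, mul_one]
  congr 1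
  ring

theorem traceNorm_violation_rules_out_LHS_covariance (dA dB : ℕ)
    (ρ : Matrix (Fin dA × Fin dB) (Fin dA × Fin dB) ℂ)
    (hρ : ρ.PosSemidef) (hρ1 : ρ.trace = 1)
    (A : Fin (dA ^ 2) → Matrix (Fin dA) (Fin dA) ℂ)
    (hhermA : ∀ k, (A k).IsHermitian)
    (horthA : ∀ k l, (A k * A l).trace = if k = l then 1 else 0)
    (hspanA : ∀ M : Matrix (Fin dA) (Fin dA) ℂ, M.IsHermitian →
      M ∈ Submodule.span ℝ (Set.range A))
    (B : Fin (dB ^ 2) → Matrix (Fin dB) (Fin dB) ℂ)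
    (hhermB : ∀ k, (B k).IsHermitian)
    (horthB : ∀ k l, (B k * B l).trace = if k = l then 1 else 0)
    (hspanB : ∀ M : Matrix (Fin dB) (Fin dB) ℂ, M.IsHermitian →
      M ∈ Submodule.span ℝ (Set.range B)) :
    let ρA : Matrix (Fin dA) (Fin dA) ℂ := Matrix.of fun i i' => ∑ j, ρ (i, j) (i', j)
    let ρB : Matrix (Fin dB) (Fin dB) ℂ := Matrix.of fun j j' => ∑ i, ρ (i, j) (i, j')
    let Cb : Matrix (Fin (dA ^ 2)) (Fin (dB ^ 2)) ℝ := Matrix.of fun k l =>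
      (ρ * (A k ⊗ₖ B l)).trace.re - (ρA * A k).trace.re * (ρB * B l).trace.re
    let γAB := Matrix.fromBlocks (covMatG A ρA) Cb Cbᵀ (covMatG B ρB)
    Real.sqrt (((dA : ℝ) - (ρA * ρA).trace.re) * (1 - (ρB * ρB).trace.re))
        < traceNorm Cb →
      ¬ ∃ (K : ℕ) (p : Fin K → ℝ) (b : Fin K → (Fin dB → ℂ)),
        (∀ k, 0 ≤ p k) ∧ (∑ k, p k = 1) ∧
        (∀ k, ∑ i, Complex.normSq (b k i) = 1) ∧
        (γAB - Matrix.fromBlocks 0 0 0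
          (∑ k, p k • covMatG B (Matrix.vecMulVec (b k) (star (b k))))).PosSemidef :=
  traceNorm_violation_rules_out_LHS_covariance_general dA dB ρ hρ hρ1 A hhermA horthA B hhermB
    horthB
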